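/- arXiv:2105.12817 — 5 statements merged into one kernel-verified Lean document; each statement's English description precedes it below -/
import Mathlib

section
/- The function u defined piecewise by u(x) = F + κ_B h (T_a − F) x / ζ for 0 ≤ x ≤ l and u(x) = F + h(T_a − F)(l(κ_B − κ_A) + κ_A x)/ζ for l < x ≤ L, where ζ = κ_A κ_B + κ_A h L + (κ_B − κ_A) h l, satisfies: u'' = 0 on (0,l) and on (l,L), u(0) = F, continuity u(l⁻) = u(l⁺), flux continuity κ_A u'(l⁻) = κ_B u'(l⁺), and the Robin condition κ_B u'(L) = −h(u(L) − T_a). -/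
/-!
On each side of the interface `l` the profile is affine, so its second derivative vanishes there
and its one-sided limits and one-sided derivatives at `l` and `L` are those of the affine pieces.
The two pieces take the same value at `l`, their slopes are in the ratio `κB : κA`, and the
Robin condition at `L` reduces to the defining identity of `ζ`.
-/

open Set Filter Topology

section AffineGerm

variable {f : ℝ → ℝ} {s : Set ℝ} {x a b : ℝ}

theorem deriv_deriv_eq_zero_of_eventuallyEq_affine (hf : f =ᶠ[𝓝 x] fun y => a + b * y) :
    deriv (deriv f) x = 0 := by
  have hderiv : deriv (fun y => a + b * y) = fun _ => b := by
    funext y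
    simp
  rw [hf.deriv.deriv_eq, hderiv, deriv_const]

theorem tendsto_nhdsWithin_of_eventuallyEq_affine (hf : f =ᶠ[𝓝[s] x] fun y => a + b * y) :
    Tendsto f (𝓝[s] x) (𝓝 (a + b * x)) :=
  ((continuous_const.add (continuous_const.mul continuous_id)).tendsto x).mono_left
    nhdsWithin_le_nhds |>.congr' hf.symm

theorem derivWithin_eq_of_eventuallyEq_affine (hf : f =ᶠ[𝓝[s] x] fun y => a + b * y)
    (hfx : f x = a + b * x) (hs : UniqueDiffWithinAt ℝ s x) : derivWithin f s x = b := by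
  rw [hf.derivWithin_eq hfx]
  exact (((hasDerivAt_id x).const_mul b).const_add a).hasDerivWithinAt.derivWithin hs
    |>.trans (mul_one b)

end AffineGerm

theorem stmt_0_general (l L κA κB h F Ta ζ : ℝ)
    (hl : 0 < l) (hlL : l < L) (hκA : 0 < κA) (hκB : 0 < κB) (hh : 0 < h)
    (hζ : ζ = κA * κB + κA * h * L + (κB - κA) * h * l)
    (u : ℝ → ℝ)
    (hu : ∀ x, u x = if x ≤ l then F + κB * h * (Ta - F) / ζ * x
          else F + h * (Ta - F) * (l * (κB - κA) + κA * x) / ζ) :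
    (∀ x ∈ Ioo (0:ℝ) l, deriv (deriv u) x = 0) ∧
    (∀ x ∈ Ioo l L, deriv (deriv u) x = 0) ∧
    u 0 = F ∧
    Tendsto u (nhdsWithin l (Iio l)) (nhds (u l)) ∧
    Tendsto u (nhdsWithin l (Ioi l)) (nhds (u l)) ∧
    κA * derivWithin u (Iio l) l = κB * derivWithin u (Ioi l) l ∧
    κB * derivWithin u (Iic L) L = -h * (u L - Ta) := by
  have hζ_ne : ζ ≠ 0 := by
    have : 0 < κA * κB + κA * h * (L - l) + κB * h * l := by
      have := sub_pos.2 hlL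
      positivity
    linarith
  set b₁ := κB * h * (Ta - F) / ζ
  set b₂ := h * (Ta - F) * κA / ζ
  set a₂ := F + h * (Ta - F) * (l * (κB - κA)) / ζ
  have hu_left : EqOn u (fun y => F + b₁ * y) (Iic l) := fun x hx => by
    simp [hu x, mem_Iic.1 hx, b₁]
  have hu_right : EqOn u (fun y => a₂ + b₂ * y) (Ioi l) := fun x hx => by
    rw [hu x, if_neg (not_le.2 hx)]
    ring
  have hu_l : u l = a₂ + b₂ * l := by
    rw [hu_left self_mem_Iic]
    ring
  have hu_below : u =ᶠ[𝓝[Iio l] l] fun y => F + b₁ * y :=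
    (hu_left.mono Iio_subset_Iic_self).eventuallyEq_of_mem self_mem_nhdsWithin
  have hu_above : u =ᶠ[𝓝[Ioi l] l] fun y => a₂ + b₂ * y :=
    hu_right.eventuallyEq_of_mem self_mem_nhdsWithin
  refine ⟨fun x hx => ?_, fun x hx => ?_, ?_, ?_, ?_, ?_, ?_⟩
  · exact deriv_deriv_eq_zero_of_eventuallyEq_affine <|
      hu_left.eventuallyEq_of_mem (Iic_mem_nhds hx.2)
  · exact deriv_deriv_eq_zero_of_eventuallyEq_affine <|
      hu_right.eventuallyEq_of_mem (Ioi_mem_nhds hx.1)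
  · simp [hu_left (mem_Iic.2 hl.le)]
  · rw [hu_left self_mem_Iic]
    exact tendsto_nhdsWithin_of_eventuallyEq_affine hu_below
  · rw [hu_l]
    exact tendsto_nhdsWithin_of_eventuallyEq_affine hu_above
  · rw [derivWithin_eq_of_eventuallyEq_affine hu_below (hu_left self_mem_Iic)
        (uniqueDiffWithinAt_Iio l),
      derivWithin_eq_of_eventuallyEq_affine hu_above hu_l (uniqueDiffWithinAt_Ioi l)]
    ring
  · rw [derivWithin_eq_of_eventuallyEq_affine
        (hu_right.eventuallyEq_of_mem (mem_nhdsWithin_of_mem_nhds (Ioi_mem_nhds hlL)))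
        (hu_right hlL) (uniqueDiffOn_Iic L L self_mem_Iic), hu_right hlL]
    simp only [a₂, b₂]
    field_simp
    linear_combination (F - Ta) * hζ

theorem stmt_0 (l L κA κB h F Ta ζ : ℝ)
    (hl : 0 < l) (hlL : l < L) (hκA : 0 < κA) (hκB : 0 < κB) (hh : 0 < h)
    (hF : Ta < F)
    (hζ : ζ = κA * κB + κA * h * L + (κB - κA) * h * l)
    (u : ℝ → ℝ)
    (hu : ∀ x, u x = if x ≤ l then F + κB * h * (Ta - F) / ζ * x
          else F + h * (Ta - F) * (l * (κB - κA) + κA * x) / ζ) :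
    (∀ x ∈ Ioo (0:ℝ) l, deriv (deriv u) x = 0) ∧
    (∀ x ∈ Ioo l L, deriv (deriv u) x = 0) ∧
    u 0 = F ∧
    Tendsto u (nhdsWithin l (Iio l)) (nhds (u l)) ∧
    Tendsto u (nhdsWithin l (Ioi l)) (nhds (u l)) ∧
    κA * derivWithin u (Iio l) l = κB * derivWithin u (Ioi l) l ∧
    κB * derivWithin u (Iic L) L = -h * (u L - Ta) :=
  stmt_0_general l L κA κB h F Ta ζ hl hlL hκA hκB hh hζ u hu
end

section
/- Let q and q̂ be two flux values in (0, q̄_M) with corresponding conductivities κ_A and κ̂_A given by the inversion formula κ = q h l κ_B/(h κ_B(F − T_a) − q h(L−l) − q κ_B). Then |1/κ_A − 1/κ̂_A| = (F − T_a)/(l q q̂) · |q − q̂|. -/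
/-!
The inversion formula makes `1 / κ` an affine function of `1 / q` with slope `(F - Ta) / l`,
so the difference of two reciprocal conductivities is `(F - Ta) / l * (1 / q - 1 / q')`.
-/

open Set

lemma one_div_conductivity_inversion {l L κB h F Ta q : ℝ}
    (hκB : κB ≠ 0) (hh : h ≠ 0) (hl : l ≠ 0) (hq : q ≠ 0) :
    1 / (q * h * l * κB / (h * κB * (F - Ta) - q * h * (L - l) - q * κB)) =
      (F - Ta) / l / q - (h * (L - l) + κB) / (h * l * κB) := by
  rw [one_div_div]
  field_simp
  ring

lemma abs_div_sub_div_of_pos {a q q' : ℝ} (ha : 0 ≤ a) (hq : 0 < q) (hq' : 0 < q') :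
    |a / q - a / q'| = a / (q * q') * |q - q'| := by
  have hdiff : a / q - a / q' = a / (q * q') * (q' - q) := by
    field_simp
  rw [hdiff, abs_mul, abs_of_nonneg (by positivity), abs_sub_comm]

theorem stmt_8_general (l L κB h F Ta q q' κA κA' : ℝ)
    (hκB : 0 < κB) (hh : 0 < h) (hl : 0 < l) (hF : Ta < F)
    (hq : q ∈ Ioo 0 (h * κB * (F - Ta) / (κB + h * (L - l))))
    (hq' : q' ∈ Ioo 0 (h * κB * (F - Ta) / (κB + h * (L - l))))
    (hκA : κA = q * h * l * κB / (h * κB * (F - Ta) - q * h * (L - l) - q * κB))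
    (hκA' : κA' = q' * h * l * κB / (h * κB * (F - Ta) - q' * h * (L - l) - q' * κB)) :
    |1 / κA - 1 / κA'| = (F - Ta) / (l * q * q') * |q - q'| := by
  obtain ⟨hq0, -⟩ := hq
  obtain ⟨hq0', -⟩ := hq'
  have hslope : 0 ≤ (F - Ta) / l := div_nonneg (sub_nonneg.2 hF.le) hl.le
  rw [hκA, hκA',
    one_div_conductivity_inversion hκB.ne' hh.ne' hl.ne' hq0.ne',
    one_div_conductivity_inversion hκB.ne' hh.ne' hl.ne' hq0'.ne',
    sub_sub_sub_cancel_right, abs_div_sub_div_of_pos hslope hq0 hq0', div_div, mul_assoc]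

theorem stmt_8 (l L κB h F Ta q q' κA κA' : ℝ)
    (hκB : 0 < κB) (hh : 0 < h) (hl : 0 < l) (hlL : l < L) (hF : Ta < F)
    (hq : q ∈ Ioo 0 (h * κB * (F - Ta) / (κB + h * (L - l))))
    (hq' : q' ∈ Ioo 0 (h * κB * (F - Ta) / (κB + h * (L - l))))
    (hκA : κA = q * h * l * κB / (h * κB * (F - Ta) - q * h * (L - l) - q * κB))
    (hκA' : κA' = q' * h * l * κB / (h * κB * (F - Ta) - q' * h * (L - l) - q' * κB)) :
    |1 / κA - 1 / κA'| = (F - Ta) / (l * q * q') * |q - q'| :=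
  stmt_8_general l L κB h F Ta q q' κA κA' hκB hh hl hF hq hq' hκA hκA'
end

section
/- For κ_A(q) = q h l κ_B/(h κ_B(F − T_a) − q h(L−l) − q κ_B) on (0, q̄_M), the elasticity (q/κ_A(q))·κ_A'(q) equals (F − T_a) h κ_B/(h κ_B(F − T_a) − q(κ_B + h(L−l))). -/
/-!
`κ_A(q) = a q / (b - c q)` with `a = h l κ_B`, `b = h κ_B (F - T_a)`, `c = κ_B + h (L - l)`,
so `q̄_M = b / c`. A Möbius map of this shape has derivative `a b / (b - c q)²`, hence
elasticity `b / (b - c q)`, and on `(0, b / c)` the denominator `b - c q = c (b / c - q)`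
does not vanish.
-/

open Set

lemma sub_mul_ne_zero_of_mem_Ioo_div {b c q : ℝ} (hq : q ∈ Ioo 0 (b / c)) : b - q * c ≠ 0 := by
  obtain ⟨hq0, hqlt⟩ := hq
  have hc : c ≠ 0 := by
    rintro rfl
    simp only [div_zero] at hqlt
    linarith
  have : b - q * c = c * (b / c - q) := by field_simp
  rw [this]
  exact mul_ne_zero hc (sub_ne_zero.mpr hqlt.ne')

lemma hasDerivAt_mul_div_sub_mul (a b c x : ℝ) (hx : b - x * c ≠ 0) :
    HasDerivAt (fun y => y * a / (b - y * c)) (a * b / (b - x * c) ^ 2) x := by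
  have hnum : HasDerivAt (fun y => y * a) a x := by
    simpa using (hasDerivAt_id x).mul_const a
  have hden : HasDerivAt (fun y => b - y * c) (-c) x := by
    simpa using ((hasDerivAt_id x).mul_const c).const_sub b
  exact (hnum.div hden hx).congr_deriv (by ring)

lemma elasticity_mul_div_sub_mul {a b c x : ℝ} (hx : x ≠ 0) (ha : a ≠ 0)
    (hden : b - x * c ≠ 0) :
    x / (x * a / (b - x * c)) * deriv (fun y => y * a / (b - y * c)) x = b / (b - x * c) := by
  rw [(hasDerivAt_mul_div_sub_mul a b c x hden).deriv]
  field_simp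

theorem stmt_13_general (l L κB h F Ta : ℝ)
    (hκB : 0 < κB) (hh : 0 < h) (hl : 0 < l)
    (κA : ℝ → ℝ)
    (hκA : ∀ q, κA q = q * h * l * κB / (h * κB * (F - Ta) - q * h * (L - l) - q * κB))
    (qM : ℝ) (hqM : qM = h * κB * (F - Ta) / (κB + h * (L - l))) :
    ∀ q ∈ Ioo 0 qM,
      q / κA q * deriv κA q
        = (F - Ta) * h * κB / (h * κB * (F - Ta) - q * (κB + h * (L - l))) := by
  intro q hq
  set b := h * κB * (F - Ta)
  set c := κB + h * (L - l)
  have hκA_eq : κA = fun y => y * (h * l * κB) / (b - y * c) := by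
    funext y
    rw [hκA]
    simp only [c]
    ring
  subst hqM
  have hden := sub_mul_ne_zero_of_mem_Ioo_div hq
  rw [hκA_eq, elasticity_mul_div_sub_mul hq.1.ne' (by positivity) hden]
  ring

theorem stmt_13 (l L κB h F Ta : ℝ)
    (hκB : 0 < κB) (hh : 0 < h) (hl : 0 < l) (hlL : l < L) (hF : Ta < F)
    (κA : ℝ → ℝ)
    (hκA : ∀ q, κA q = q * h * l * κB / (h * κB * (F - Ta) - q * h * (L - l) - q * κB))
    (qM : ℝ) (hqM : qM = h * κB * (F - Ta) / (κB + h * (L - l))) :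
    ∀ q ∈ Ioo 0 qM,
      q / κA q * deriv κA q
        = (F - Ta) * h * κB / (h * κB * (F - Ta) - q * (κB + h * (L - l))) :=
  stmt_13_general l L κB h F Ta hκB hh hl κA hκA qM hqM
end

section
/- For all x in [0,L], the two-material solution u satisfies T_a < u(x) ≤ F, with u(0) = F and u(L) = F + h(T_a − F)(l κ_B + (L−l)κ_A)/ζ > T_a. -/
/-!
Writing `ζ = κA κB + h R` with `R = l κB + (L - l) κA`, the solution reads
`u x = F - (F - Ta) h r(x) / ζ`, where `r(x)` is `κA κB` times the thermal resistance of `[0, x]`.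
Since `r` increases from `r 0 = 0` to `r L = R`, the value `u x` lies between `u 0 = F` and
`u L = F - (F - Ta) h R / (κA κB + h R)`, which exceeds `Ta` because `κA κB > 0`.
-/

open Set

/-- `κA κB ∫₀ˣ dy / κ(y)` for the slab with conductivity `κA` on `[0, l]` and `κB` beyond. -/
noncomputable def scaledResistance (κA κB l x : ℝ) : ℝ :=
  if x ≤ l then κB * x else l * κB + (x - l) * κA

lemma scaledResistance_monotone {κA κB l : ℝ} (hκA : 0 ≤ κA) (hκB : 0 ≤ κB) :
    Monotone (scaledResistance κA κB l) := by
  intro x y hxy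
  unfold scaledResistance
  split_ifs with hx hy hy
  · exact mul_le_mul_of_nonneg_left hxy hκB
  · nlinarith [mul_le_mul_of_nonneg_left hx hκB]
  · linarith
  · nlinarith [mul_le_mul_of_nonneg_right (sub_le_sub_right hxy l) hκA]

lemma scaledResistance_zero {κA κB l : ℝ} (hl : 0 ≤ l) : scaledResistance κA κB l 0 = 0 := by
  simp [scaledResistance, hl]

lemma scaledResistance_of_lt {κA κB l L : ℝ} (hlL : l < L) :
    scaledResistance κA κB l L = l * κB + (L - l) * κA := by
  simp [scaledResistance, not_le.2 hlL]

lemma lt_add_mul_div_le {p h F Ta s R : ℝ} (hp : 0 < p) (hh : 0 < h) (hF : Ta < F)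
    (hs : 0 ≤ s) (hsR : s ≤ R) :
    Ta < F + h * (Ta - F) * s / (p + h * R) ∧ F + h * (Ta - F) * s / (p + h * R) ≤ F := by
  have hden : 0 < p + h * R := by nlinarith
  have hhs : h * s ≤ h * R := mul_le_mul_of_nonneg_left hsR hh.le
  constructor
  · rw [← sub_lt_iff_lt_add', lt_div_iff₀ hden]
    nlinarith [mul_pos (sub_pos.2 hF) hp, mul_le_mul_of_nonneg_left hhs (sub_pos.2 hF).le]
  · have : h * (Ta - F) * s / (p + h * R) ≤ 0 :=
      div_nonpos_of_nonpos_of_nonneg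
        (mul_nonpos_of_nonpos_of_nonneg (by nlinarith) hs) hden.le
    linarith

theorem stmt_17 (l L κA κB h F Ta ζ : ℝ)
    (hκA : 0 < κA) (hκB : 0 < κB) (hh : 0 < h) (hl : 0 < l) (hlL : l < L)
    (hF : Ta < F)
    (hζ : ζ = κA * κB + κA * h * L + (κB - κA) * h * l)
    (u : ℝ → ℝ)
    (hu : ∀ x, u x = if x ≤ l then F + κB * h * (Ta - F) / ζ * x
          else F + h * (Ta - F) * (l * (κB - κA) + κA * x) / ζ) :
    (∀ x ∈ Icc (0:ℝ) L, Ta < u x ∧ u x ≤ F) ∧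
    u 0 = F ∧
    u L = F + h * (Ta - F) * (l * κB + (L - l) * κA) / ζ ∧
    Ta < u L := by
  have hu_r : ∀ x, u x = F + h * (Ta - F) * scaledResistance κA κB l x / ζ := by
    intro x
    rw [hu]
    simp only [scaledResistance]
    split_ifs <;> ring
  have hζ_r : ζ = κA * κB + h * scaledResistance κA κB l L := by
    rw [hζ, scaledResistance_of_lt hlL]; ring
  have hbounds : ∀ x ∈ Icc (0:ℝ) L, Ta < u x ∧ u x ≤ F := by
    rintro x ⟨hx0, hxL⟩
    have hmono := scaledResistance_monotone (l := l) hκA.le hκB.le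
    rw [hu_r, hζ_r]
    exact lt_add_mul_div_le (mul_pos hκA hκB) hh hF
      (scaledResistance_zero hl.le ▸ hmono hx0) (hmono hxL)
  refine ⟨hbounds, ?_, ?_, (hbounds L ⟨by linarith, le_rfl⟩).1⟩
  · rw [hu_r, scaledResistance_zero hl.le]; ring
  · rw [hu_r, scaledResistance_of_lt hlL]
end

section
/- The forward map κ_A ↦ q(κ_A) = κ_A κ_B h(F − T_a)/(κ_A κ_B + κ_A h(L−l) + κ_B h l) is a bijection from (0, ∞) onto (0, q̄_M), where q̄_M = h κ_B(F − T_a)/(κ_B + h(L−l)), with inverse q ↦ q h l κ_B/(h κ_B(F − T_a) − q h(L−l) − q κ_B). -/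
/-! The flux is a fractional linear function of the conductivity:
writing `a = κB h (F - Ta)`, `b = κB + h (L - l)` and `c = κB h l`, it is `κA ↦ a κA / (b κA + c)`,
which for positive `a, b, c` increases from `0` to its horizontal asymptote `a / b` and is inverted
by solving `q (b κA + c) = a κA`, i.e. by `q ↦ c q / (a - b q)`. -/

open Set

section FractionalLinear

variable {a b c : ℝ}

theorem mapsTo_mul_div_mul_add (ha : 0 < a) (hb : 0 < b) (hc : 0 < c) :
    MapsTo (fun x : ℝ => a * x / (b * x + c)) (Ioi 0) (Ioo 0 (a / b)) := by
  intro x (hx : 0 < x)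
  have hden : 0 < b * x + c := by positivity
  refine ⟨by positivity, ?_⟩
  rw [div_lt_div_iff₀ hden hb]
  nlinarith [mul_pos ha hc]

theorem mapsTo_mul_div_sub_mul (hb : 0 < b) (hc : 0 < c) :
    MapsTo (fun y : ℝ => c * y / (a - b * y)) (Ioo 0 (a / b)) (Ioi 0) := by
  rintro y ⟨hy, hya⟩
  have hden : 0 < a - b * y := by
    rw [lt_div_iff₀ hb] at hya
    linarith
  exact div_pos (mul_pos hc hy) hden

theorem invOn_mul_div_sub_mul (ha : 0 < a) (hb : 0 < b) (hc : 0 < c) :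
    InvOn (fun y : ℝ => c * y / (a - b * y)) (fun x : ℝ => a * x / (b * x + c))
      (Ioi 0) (Ioo 0 (a / b)) := by
  constructor
  · intro x (hx : 0 < x)
    have hden : b * x + c ≠ 0 := by positivity
    have hsub : a - b * (a * x / (b * x + c)) = a * c / (b * x + c) := by
      field_simp
      ring
    change c * (a * x / (b * x + c)) / (a - b * (a * x / (b * x + c))) = x
    rw [hsub, ← mul_div_assoc, div_div_div_cancel_right₀ hden]
    field_simp
  · rintro y ⟨-, hya⟩
    have hden : a - b * y ≠ 0 := by
      rw [lt_div_iff₀ hb] at hya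
      linarith
    have hadd : b * (c * y / (a - b * y)) + c = a * c / (a - b * y) := by
      field_simp
      ring
    change a * (c * y / (a - b * y)) / (b * (c * y / (a - b * y)) + c) = y
    rw [hadd, ← mul_div_assoc, div_div_div_cancel_right₀ hden]
    field_simp

theorem bijOn_mul_div_mul_add (ha : 0 < a) (hb : 0 < b) (hc : 0 < c) :
    BijOn (fun x : ℝ => a * x / (b * x + c)) (Ioi 0) (Ioo 0 (a / b)) :=
  (invOn_mul_div_sub_mul ha hb hc).bijOn (mapsTo_mul_div_mul_add ha hb hc)
    (mapsTo_mul_div_sub_mul hb hc)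

end FractionalLinear

theorem stmt_19 (l L κB h F Ta : ℝ)
    (hκB : 0 < κB) (hh : 0 < h) (hl : 0 < l) (hlL : l < L) (hF : Ta < F) :
    Set.BijOn
      (fun κA : ℝ => κA * κB * h * (F - Ta) / (κA * κB + κA * h * (L - l) + κB * h * l))
      (Ioi 0) (Ioo 0 (h * κB * (F - Ta) / (κB + h * (L - l)))) ∧
    (∀ κA ∈ Ioi (0:ℝ),
      (fun q : ℝ => q * h * l * κB / (h * κB * (F - Ta) - q * h * (L - l) - q * κB))
        ((fun κA : ℝ => κA * κB * h * (F - Ta) / (κA * κB + κA * h * (L - l) + κB * h * l)) κA)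
        = κA) ∧
    (∀ q ∈ Ioo 0 (h * κB * (F - Ta) / (κB + h * (L - l))),
      (fun κA : ℝ => κA * κB * h * (F - Ta) / (κA * κB + κA * h * (L - l) + κB * h * l))
        ((fun q : ℝ => q * h * l * κB / (h * κB * (F - Ta) - q * h * (L - l) - q * κB)) q)
        = q) := by
  have ha : 0 < κB * h * (F - Ta) := by have := sub_pos.mpr hF; positivity
  have hb : 0 < κB + h * (L - l) := by have := sub_pos.mpr hlL; positivity
  have hc : 0 < κB * h * l := by positivity
  have hflux : (fun κA : ℝ => κA * κB * h * (F - Ta) / (κA * κB + κA * h * (L - l) + κB * h * l))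
      = fun x => κB * h * (F - Ta) * x / ((κB + h * (L - l)) * x + κB * h * l) := by
    funext x; ring
  have hinv : (fun q : ℝ => q * h * l * κB / (h * κB * (F - Ta) - q * h * (L - l) - q * κB))
      = fun y => κB * h * l * y / (κB * h * (F - Ta) - (κB + h * (L - l)) * y) := by
    funext y; ring
  have hsup : h * κB * (F - Ta) / (κB + h * (L - l)) = κB * h * (F - Ta) / (κB + h * (L - l)) := by
    ring
  rw [hflux, hinv, hsup]
  exact ⟨bijOn_mul_div_mul_add ha hb hc, (invOn_mul_div_sub_mul ha hb hc).1,
    (invOn_mul_div_sub_mul ha hb hc).2⟩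
end
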